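/- arXiv:2410.13012 — 2 statements merged into one kernel-verified Lean document; each statement's English description precedes it below -/
import Mathlib

section
/- Let f : ℕ → ℕ. Suppose that for every domain X' and every binary concept class H ⊆ {0,1}^{X'} with finite VC dimension d, there exists a stable exact realizable sample compression scheme for H of size at most f(d). Then for every multiclass concept class C ⊆ Y^X with finite label set Y and finite graph dimension d_G, there exists a stable exact realizable sample compression scheme for C of size at most f(d_G). -/
universe u v

/-- A finite sample `S` is realizable by the concept class `C`. -/
def Realizable {X Y : Type*} (C : Set (X → Y)) (S : List (X × Y)) : Prop :=
  ∃ c ∈ C, ∀ p ∈ S, c p.1 = p.2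

/-- `(κ, ρ)` is an exact realizable sample compression scheme for `C` of size at most `k`. -/
def IsExactRealizableScheme {X Y : Type*} (C : Set (X → Y)) (k : ℕ)
    (κ : List (X × Y) → List (X × Y) × List Bool)
    (ρ : List (X × Y) × List Bool → X → Y) : Prop :=
  (∀ S : List (X × Y), (κ S).1 ⊆ S) ∧
  (∀ S : List (X × Y), Realizable C S → (κ S).1.length + (κ S).2.length ≤ k) ∧
  (∀ S : List (X × Y), Realizable C S → ∀ p ∈ S, ρ (κ S) p.1 = p.2)

/-- A compression function is stable: for every realizable `S` and every `T` with
`κ S ⊆ T ⊆ S` (containment of the underlying sets of examples), `κ T = κ S`. -/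
def IsStable {X Y : Type*} (C : Set (X → Y))
    (κ : List (X × Y) → List (X × Y) × List Bool) : Prop :=
  ∀ S T : List (X × Y), Realizable C S → (κ S).1 ⊆ T → T ⊆ S → κ T = κ S

/-- `n` points of `X` are shattered by the binary concept class `H ⊆ {0,1}^X`. -/
def ShattersN {X : Type*} (H : Set (X → Bool)) (n : ℕ) : Prop :=
  ∃ x : Fin n → X, ∀ b : Fin n → Bool, ∃ h ∈ H, ∀ i, h (x i) = b i

/-- `H` has (finite) VC dimension exactly `d`. -/
def IsVCDim {X : Type*} (H : Set (X → Bool)) (d : ℕ) : Prop :=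
  ShattersN H d ∧ ¬ ShattersN H (d + 1)

/-- `n` points of `X` are G-shattered by the multiclass concept class `C ⊆ Y^X`. -/
def GShattersN {X Y : Type*} (C : Set (X → Y)) (n : ℕ) : Prop :=
  ∃ (x : Fin n → X) (y : Fin n → Y),
    ∀ b : Fin n → Bool, ∃ c ∈ C, ∀ i, (c (x i) = y i ↔ b i = true)

/-- `C` has (finite) graph dimension exactly `d`. -/
def IsGraphDim {X Y : Type*} (C : Set (X → Y)) (d : ℕ) : Prop :=
  GShattersN C d ∧ ¬ GShattersN C (d + 1)

/-!
Encode `c : X → Y` by the binary concept `(x, y) ↦ [c x = y]` on `X × Y`; these concepts form a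
binary class whose VC dimension is the graph dimension of `C`. A multiclass sample `S` is blown up
to the binary sample recording, for every example `(x, y)` of `S` and every label `y'`, whether
`y' = y`, and the binary scheme is run on it. Each binary example kept by the compression is
replaced by the example of `S` at the same point. Stability of the binary scheme makes the
compression of the blown-up compression set equal to the compression of the blown-up sample, so
the decoder can recompute it from the kept examples alone; the binary reconstruction then marks
exactly one label as correct at each point of `S`.
-/

section GraphReduction

variable {X : Type u} {Y : Type v} [DecidableEq Y]

def graphIndicator (c : X → Y) : X × Y → Bool :=
  fun q => decide (c q.1 = q.2)

def graphClass (C : Set (X → Y)) : Set (X × Y → Bool) :=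
  graphIndicator '' C

theorem shattersN_graphClass_iff {C : Set (X → Y)} {n : ℕ} :
    ShattersN (graphClass C) n ↔ GShattersN C n := by
  constructor
  · rintro ⟨q, hq⟩
    refine ⟨fun i => (q i).1, fun i => (q i).2, fun b => ?_⟩
    obtain ⟨-, ⟨c, hcC, rfl⟩, hcb⟩ := hq b
    exact ⟨c, hcC, fun i => by rw [← hcb i, graphIndicator, decide_eq_true_iff]⟩
  · rintro ⟨x, y, hxy⟩
    refine ⟨fun i => (x i, y i), fun b => ?_⟩
    obtain ⟨c, hcC, hcb⟩ := hxy b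
    refine ⟨graphIndicator c, ⟨c, hcC, rfl⟩, fun i => Bool.eq_iff_iff.mpr ?_⟩
    rw [graphIndicator, decide_eq_true_iff]
    exact hcb i

theorem IsGraphDim.isVCDim_graphClass {C : Set (X → Y)} {d : ℕ} (hC : IsGraphDim C d) :
    IsVCDim (graphClass C) d :=
  ⟨shattersN_graphClass_iff.mpr hC.1, fun h => hC.2 (shattersN_graphClass_iff.mp h)⟩

variable [Fintype Y]

noncomputable def graphSample (S : List (X × Y)) : List ((X × Y) × Bool) :=
  S.flatMap fun p => (Finset.univ : Finset Y).toList.map fun y => ((p.1, y), decide (p.2 = y))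

theorem mem_graphSample {S : List (X × Y)} {q : (X × Y) × Bool} :
    q ∈ graphSample S ↔ ∃ p ∈ S, ∃ y : Y, q = ((p.1, y), decide (p.2 = y)) := by
  simp [graphSample, eq_comm]

theorem graphSample_mono {S T : List (X × Y)} (h : S ⊆ T) : graphSample S ⊆ graphSample T := by
  intro q hq
  obtain ⟨p, hp, y, rfl⟩ := mem_graphSample.mp hq
  exact mem_graphSample.mpr ⟨p, h hp, y, rfl⟩

theorem Realizable.graphSample {C : Set (X → Y)} {S : List (X × Y)} (h : Realizable C S) :
    Realizable (graphClass C) (graphSample S) := by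
  obtain ⟨c, hcC, hc⟩ := h
  refine ⟨graphIndicator c, ⟨c, hcC, rfl⟩, fun q hq => ?_⟩
  obtain ⟨p, hp, y, rfl⟩ := mem_graphSample.mp hq
  simp [graphIndicator, hc p hp]

end GraphReduction

theorem GShattersN.nonempty {X Y : Type*} {C : Set (X → Y)} {n : ℕ} (hC : GShattersN C n) :
    C.Nonempty :=
  let ⟨_, _, h⟩ := hC
  let ⟨c, hc, _⟩ := h fun _ => true
  ⟨c, hc⟩

section FindExample

variable {X : Type u} {Y : Type v} [DecidableEq X]

def findExample (S : List (X × Y)) (q : X × Y) : X × Y :=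
  (S.find? fun p => p.1 = q.1).getD q

theorem findExample_mem {S : List (X × Y)} {p : X × Y} (hp : p ∈ S) (y : Y) :
    findExample S (p.1, y) ∈ S ∧ (findExample S (p.1, y)).1 = p.1 := by
  obtain ⟨p', hp'⟩ : ∃ p', S.find? (fun p' => p'.1 = p.1) = some p' :=
    Option.isSome_iff_exists.mp (List.find?_isSome.mpr ⟨p, hp, by simp⟩)
  have hfst : p'.1 = p.1 := by simpa using List.find?_some hp'
  simpa [findExample, hp'] using ⟨List.mem_of_find?_eq_some hp', hfst⟩

theorem findExample_eq_of_consistent {c : X → Y} {S : List (X × Y)}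
    (hc : ∀ p ∈ S, c p.1 = p.2) {p : X × Y} (hp : p ∈ S) (y : Y) :
    findExample S (p.1, y) = p := by
  obtain ⟨hmem, hfst⟩ := findExample_mem hp y
  exact Prod.ext hfst (by rw [← hc _ hmem, hfst, hc p hp])

end FindExample

section DecodeLabel

variable {X : Type u} {Y : Type v}

open Classical in
noncomputable def decodeLabel (g : X × Y → Bool) (default : X → Y) (x : X) : Y :=
  if h : ∃ y, g (x, y) = true then h.choose else default x

theorem decodeLabel_eq [DecidableEq Y] {g : X × Y → Bool} {x : X} {y₀ : Y}
    (hg : ∀ y, g (x, y) = decide (y₀ = y)) (default : X → Y) : decodeLabel g default x = y₀ := by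
  have hex : ∃ y, g (x, y) = true := ⟨y₀, by simp [hg]⟩
  rw [decodeLabel, dif_pos hex]
  have hchoose := hex.choose_spec
  rw [hg, decide_eq_true_iff] at hchoose
  exact hchoose.symm

end DecodeLabel

section Scheme

variable {X : Type u} {Y : Type v} [DecidableEq X] [DecidableEq Y] [Fintype Y]

noncomputable def graphCompress (κ : List ((X × Y) × Bool) → List ((X × Y) × Bool) × List Bool)
    (S : List (X × Y)) : List (X × Y) × List Bool :=
  ((κ (graphSample S)).1.map fun q => findExample S q.1, (κ (graphSample S)).2)

/-- The bits of the compression are not read: by stability, recompressing the blown-up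
compression set gives back the whole binary compression. -/
noncomputable def graphReconstruct (κ : List ((X × Y) × Bool) → List ((X × Y) × Bool) × List Bool)
    (ρ : List ((X × Y) × Bool) × List Bool → X × Y → Bool) (default : X → Y)
    (L : List (X × Y) × List Bool) : X → Y :=
  decodeLabel (ρ (κ (graphSample L.1))) default

variable {K : List ((X × Y) × Bool)} {S T : List (X × Y)} {c : X → Y}

theorem subset_graphSample_of_map_findExample_subset (hK : K ⊆ graphSample S)
    (hc : ∀ p ∈ S, c p.1 = p.2) (hT : K.map (fun q => findExample S q.1) ⊆ T) :
    K ⊆ graphSample T := by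
  intro q hq
  obtain ⟨p, hp, y, rfl⟩ := mem_graphSample.mp (hK hq)
  have hpT : p ∈ T := findExample_eq_of_consistent hc hp y ▸ hT (List.mem_map_of_mem hq)
  exact mem_graphSample.mpr ⟨p, hpT, y, rfl⟩

theorem map_findExample_congr (hK : K ⊆ graphSample S) (hc : ∀ p ∈ S, c p.1 = p.2)
    (hT : K.map (fun q => findExample S q.1) ⊆ T) (hTS : T ⊆ S) :
    K.map (fun q => findExample T q.1) = K.map (fun q => findExample S q.1) := by
  refine List.map_congr_left fun q hq => ?_
  obtain ⟨p, hp, y, rfl⟩ := mem_graphSample.mp (hK hq)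
  have hpT : p ∈ T := findExample_eq_of_consistent hc hp y ▸ hT (List.mem_map_of_mem hq)
  rw [findExample_eq_of_consistent hc hp y,
    findExample_eq_of_consistent (fun p hp => hc p (hTS hp)) hpT y]

variable {C : Set (X → Y)} {k : ℕ} {κ : List ((X × Y) × Bool) → List ((X × Y) × Bool) × List Bool}
  {ρ : List ((X × Y) × Bool) × List Bool → X × Y → Bool}

theorem graphCompress_subset (hsub : ∀ S, (κ S).1 ⊆ S) (S : List (X × Y)) :
    (graphCompress κ S).1 ⊆ S := by
  intro q hq
  obtain ⟨q', hq', rfl⟩ := List.mem_map.mp hq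
  obtain ⟨p, hp, y, rfl⟩ := mem_graphSample.mp (hsub _ hq')
  exact (findExample_mem hp y).1

theorem compress_graphSample_eq (hsub : ∀ S, (κ S).1 ⊆ S) (hstab : IsStable (graphClass C) κ)
    (hS : Realizable C S) (hT : (graphCompress κ S).1 ⊆ T) (hTS : T ⊆ S) :
    κ (graphSample T) = κ (graphSample S) := by
  refine hstab _ _ hS.graphSample ?_ (graphSample_mono hTS)
  obtain ⟨c, -, hc⟩ := hS
  exact subset_graphSample_of_map_findExample_subset (hsub _) hc hT

theorem isStable_graphCompress (hsub : ∀ S, (κ S).1 ⊆ S) (hstab : IsStable (graphClass C) κ) :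
    IsStable C (graphCompress κ) := by
  intro S T hS hT hTS
  have heq := compress_graphSample_eq hsub hstab hS hT hTS
  obtain ⟨c, -, hc⟩ := hS
  simp only [graphCompress, heq] at hT ⊢
  rw [map_findExample_congr (hsub _) hc hT hTS]

theorem isExactRealizableScheme_graphCompress (hκρ : IsExactRealizableScheme (graphClass C) k κ ρ)
    (hstab : IsStable (graphClass C) κ) (default : X → Y) :
    IsExactRealizableScheme C k (graphCompress κ) (graphReconstruct κ ρ default) := by
  obtain ⟨hsub, hsize, hcorr⟩ := hκρ
  refine ⟨graphCompress_subset hsub, fun S hS => ?_, fun S hS p hp => ?_⟩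
  · simpa [graphCompress] using hsize _ hS.graphSample
  · rw [graphReconstruct, compress_graphSample_eq hsub hstab hS (List.Subset.refl _)
      (graphCompress_subset hsub S)]
    exact decodeLabel_eq (fun y => hcorr _ hS.graphSample _ (mem_graphSample.mpr ⟨p, hp, y, rfl⟩))
      default

end Scheme

/-- Multiclass reduction with stable binary compression: if every binary class of
finite VC dimension `d` has a stable exact realizable compression scheme of size at
most `f d`, then every multiclass class with finite label set and finite graph
dimension `d_G` admits a stable exact realizable compression scheme of size at most
`f d_G`. -/
theorem multiclass_stable_compression_of_binary {X : Type u} {Y : Type v} [Fintype Y]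
    (f : ℕ → ℕ)
    (hbin : ∀ (X' : Type (max u v)) (H : Set (X' → Bool)) (d : ℕ), IsVCDim H d →
      ∃ κ ρ, IsExactRealizableScheme H (f d) κ ρ ∧ IsStable H κ)
    (C : Set (X → Y)) (dG : ℕ) (hC : IsGraphDim C dG) :
    ∃ κ ρ, IsExactRealizableScheme C (f dG) κ ρ ∧ IsStable C κ := by
  classical
  obtain ⟨c₀, -⟩ := hC.1.nonempty
  obtain ⟨κ, ρ, hκρ, hstab⟩ := hbin (X × Y) (graphClass C) dG hC.isVCDim_graphClass
  exact ⟨graphCompress κ, graphReconstruct κ ρ c₀, isExactRealizableScheme_graphCompress hκρ hstab c₀,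
    isStable_graphCompress hκρ.1 hstab⟩
end

section
/- Let f : ℕ → ℕ. Suppose that for every domain X' and every binary concept class H ⊆ {0,1}^{X'} with finite VC dimension d, there exists a stable exact realizable sample compression scheme for H of size at most f(d). Then for every class C ⊆ [0,1]^X with finite pseudo-dimension d_P, every ε ∈ (0,1), and every p ∈ [1,∞], there exists an ε-approximate realizable compression scheme for C with respect to the ℓ_p loss of size at most f(d_P). -/
universe u

/-- `n` points of `X` are P-shattered by the real-valued class `C ⊆ [0,1]^X`. -/
def PShattersN {X : Type*} (C : Set (X → ℝ)) (n : ℕ) : Prop :=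
  ∃ (x : Fin n → X) (y : Fin n → ℝ), (∀ i, y i ∈ Set.Icc (0:ℝ) 1) ∧
    ∀ b : Fin n → Bool, ∃ c ∈ C, ∀ i, (c (x i) ≤ y i ↔ b i = true)

/-- `C` has (finite) pseudo-dimension exactly `d`. -/
def IsPseudoDim {X : Type*} (C : Set (X → ℝ)) (d : ℕ) : Prop :=
  PShattersN C d ∧ ¬ PShattersN C (d + 1)

/-- An `ε`-approximate realizable `ℓ_∞` compression scheme for `C ⊆ [0,1]^X`
of size at most `k`. -/
def IsApproxLinfScheme {X : Type*} (C : Set (X → ℝ)) (k : ℕ) (ε : ℝ)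
    (κ : List (X × ℝ) → List (X × ℝ) × List Bool)
    (ρ : List (X × ℝ) × List Bool → X → ℝ) : Prop :=
  (∀ S : List (X × ℝ), (κ S).1 ⊆ S) ∧
  (∀ T x, ρ T x ∈ Set.Icc (0:ℝ) 1) ∧
  (∀ S : List (X × ℝ), Realizable C S → (κ S).1.length + (κ S).2.length ≤ k) ∧
  (∀ S : List (X × ℝ), Realizable C S → ∀ p ∈ S, |ρ (κ S) p.1 - p.2| ≤ ε)

/-- An `ε`-approximate realizable `ℓ_p` compression scheme for `C ⊆ [0,1]^X`
of size at most `k`. -/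
def IsApproxLpScheme {X : Type*} (C : Set (X → ℝ)) (k : ℕ) (p ε : ℝ)
    (κ : List (X × ℝ) → List (X × ℝ) × List Bool)
    (ρ : List (X × ℝ) × List Bool → X → ℝ) : Prop :=
  (∀ S : List (X × ℝ), (κ S).1 ⊆ S) ∧
  (∀ T x, ρ T x ∈ Set.Icc (0:ℝ) 1) ∧
  (∀ S : List (X × ℝ), Realizable C S → (κ S).1.length + (κ S).2.length ≤ k) ∧
  (∀ S : List (X × ℝ), Realizable C S →
    (S.map (fun q => |ρ (κ S) q.1 - q.2| ^ p)).sum ≤ ε * S.length)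

/-!
The pseudo-dimension of `C` is the VC dimension of its epigraph class
`(x, t) ↦ 1[c x ≤ t]`, so the hypothesis yields a stable binary scheme `(κ₀, ρ₀)` for it.
A real sample `S` is replaced by the binary sample of its labels at the grid thresholds
`ε j`, `j ≤ ⌈1/ε⌉`, and the compression keeps one real example behind each binary example
that `κ₀` keeps. Stability of `κ₀` lets the reconstruction recompute the binary
compression from the kept real examples alone, and the first grid threshold at which the
resulting binary hypothesis says "above the graph" is within `ε` of every label. An
`ℓ_∞` error of `ε ≤ 1` bounds the `ℓ_p` error by `ε^p ≤ ε`.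
-/

open Set

variable {X : Type u}

def epigraphClass (C : Set (X → ℝ)) : Set (X × ℝ → Bool) :=
  (fun c q => decide (c q.1 ≤ q.2)) '' C

section PseudoDimension

variable {C : Set (X → ℝ)}

theorem shattersN_epigraphClass_of_pShattersN {n : ℕ} (h : PShattersN C n) :
    ShattersN (epigraphClass C) n := by
  obtain ⟨x, y, -, hb⟩ := h
  refine ⟨fun i => (x i, y i), fun b => ?_⟩
  obtain ⟨c, hc, hcb⟩ := hb b
  exact ⟨_, ⟨c, hc, rfl⟩, fun i => Bool.eq_iff_iff.mpr (decide_eq_true_iff.trans (hcb i))⟩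

theorem pShattersN_of_shattersN_epigraphClass (hC : ∀ g ∈ C, ∀ x, g x ∈ Icc (0 : ℝ) 1)
    {n : ℕ} (h : ShattersN (epigraphClass C) n) : PShattersN C n := by
  obtain ⟨q, hq⟩ := h
  refine ⟨fun i => (q i).1, fun i => (q i).2, fun i => ⟨?_, ?_⟩, fun b => ?_⟩
  · obtain ⟨-, ⟨c, hc, rfl⟩, hcb⟩ := hq fun _ => true
    have hle : c (q i).1 ≤ (q i).2 := of_decide_eq_true (hcb i)
    linarith [(hC c hc (q i).1).1]
  · obtain ⟨-, ⟨c, hc, rfl⟩, hcb⟩ := hq fun _ => false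
    have hlt : ¬c (q i).1 ≤ (q i).2 := of_decide_eq_false (hcb i)
    linarith [(hC c hc (q i).1).2]
  · obtain ⟨-, ⟨c, hc, rfl⟩, hcb⟩ := hq b
    exact ⟨c, hc, fun i => decide_eq_true_iff.symm.trans (Bool.eq_iff_iff.mp (hcb i))⟩

theorem isVCDim_epigraphClass (hC : ∀ g ∈ C, ∀ x, g x ∈ Icc (0 : ℝ) 1) {d : ℕ}
    (h : IsPseudoDim C d) : IsVCDim (epigraphClass C) d :=
  ⟨shattersN_epigraphClass_of_pShattersN h.1,
    mt (pShattersN_of_shattersN_epigraphClass hC) h.2⟩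

end PseudoDimension

section ThresholdDecoding

open Classical in
noncomputable def thresholdDecode (ε : ℝ) (g : ℝ → Bool) : ℝ :=
  if h : ∃ j : ℕ, g (ε * j) = true then min 1 (ε * Nat.find h) else 0

theorem thresholdDecode_mem_Icc {ε : ℝ} (hε : 0 ≤ ε) (g : ℝ → Bool) :
    thresholdDecode ε g ∈ Icc (0 : ℝ) 1 := by
  unfold thresholdDecode
  split_ifs
  · exact ⟨le_min zero_le_one (by positivity), min_le_left _ _⟩
  · exact ⟨le_rfl, zero_le_one⟩

theorem abs_thresholdDecode_sub_le {ε y : ℝ} (hε : 0 < ε) (hy : y ∈ Icc (0 : ℝ) 1)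
    {g : ℝ → Bool} (hg : ∀ j ≤ ⌈ε⁻¹⌉₊, g (ε * j) = decide (y ≤ ε * j)) :
    |thresholdDecode ε g - y| ≤ ε := by
  -- `⌈y / ε⌉` is a grid index whose threshold lies in `[y, y + ε)`.
  set j₁ := ⌈y / ε⌉₊
  have hj₁ : j₁ ≤ ⌈ε⁻¹⌉₊ :=
    Nat.ceil_mono (by
      simpa [div_eq_mul_inv] using mul_le_mul_of_nonneg_right hy.2 (inv_pos.2 hε).le)
  have hy_le : y ≤ ε * j₁ := (div_le_iff₀' hε).mp (Nat.le_ceil _)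
  have hj₁_lt : ε * j₁ < y + ε := by
    have := Nat.ceil_lt_add_one (div_nonneg hy.1 hε.le)
    calc ε * j₁ < ε * (y / ε + 1) := mul_lt_mul_of_pos_left this hε
      _ = y + ε := by field_simp
  have hex : ∃ j : ℕ, g (ε * j) = true := ⟨j₁, by simpa [hg j₁ hj₁] using hy_le⟩
  have hj₀ : Nat.find hex ≤ j₁ := Nat.find_min' hex (by simpa [hg j₁ hj₁] using hy_le)
  have hy_le₀ : y ≤ ε * Nat.find hex := by
    simpa [hg _ (hj₀.trans hj₁)] using Nat.find_spec hex
  have hmono : ε * Nat.find hex ≤ ε * j₁ := by gcongr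
  rw [thresholdDecode, dif_pos hex, abs_sub_le_iff]
  constructor
  · linarith [min_le_right 1 (ε * Nat.find hex)]
  · linarith [le_min hy.2 hy_le₀]

end ThresholdDecoding

section GridScheme

variable (ε : ℝ)

noncomputable def gridLabels (q : X × ℝ) : List ((X × ℝ) × Bool) :=
  (List.range (⌈ε⁻¹⌉₊ + 1)).map fun j : ℕ => ((q.1, ε * j), decide (q.2 ≤ ε * j))

noncomputable def gridSample (S : List (X × ℝ)) : List ((X × ℝ) × Bool) :=
  S.flatMap (gridLabels ε)

open Classical in
noncomputable def gridParent (S : List (X × ℝ)) (e : (X × ℝ) × Bool) : X × ℝ :=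
  if h : ∃ q ∈ S, e ∈ gridLabels ε q then h.choose else e.1

noncomputable def gridCompress (κ₀ : List ((X × ℝ) × Bool) → List ((X × ℝ) × Bool) × List Bool)
    (S : List (X × ℝ)) : List (X × ℝ) × List Bool :=
  ((κ₀ (gridSample ε S)).1.map (gridParent ε S), (κ₀ (gridSample ε S)).2)

noncomputable def gridReconstruct
    (κ₀ : List ((X × ℝ) × Bool) → List ((X × ℝ) × Bool) × List Bool)
    (ρ₀ : List ((X × ℝ) × Bool) × List Bool → X × ℝ → Bool)
    (T : List (X × ℝ) × List Bool) (x : X) : ℝ :=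
  thresholdDecode ε fun t => ρ₀ (κ₀ (gridSample ε T.1)) (x, t)

variable {ε}

theorem mem_gridSample_of_mem {S : List (X × ℝ)} {q : X × ℝ} (hq : q ∈ S) {j : ℕ}
    (hj : j ≤ ⌈ε⁻¹⌉₊) : ((q.1, ε * j), decide (q.2 ≤ ε * j)) ∈ gridSample ε S :=
  List.mem_flatMap.mpr ⟨q, hq, List.mem_map_of_mem (List.mem_range.mpr (Nat.lt_succ_of_le hj))⟩

theorem gridSample_mono {S T : List (X × ℝ)} (h : S ⊆ T) : gridSample ε S ⊆ gridSample ε T :=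
  fun _ he =>
    let ⟨q, hq, heq⟩ := List.mem_flatMap.mp he
    List.mem_flatMap.mpr ⟨q, h hq, heq⟩

theorem gridParent_spec {S : List (X × ℝ)} {e : (X × ℝ) × Bool} (he : e ∈ gridSample ε S) :
    gridParent ε S e ∈ S ∧ e ∈ gridLabels ε (gridParent ε S e) := by
  have h : ∃ q ∈ S, e ∈ gridLabels ε q := List.mem_flatMap.mp he
  rw [gridParent, dif_pos h]
  exact h.choose_spec

theorem realizable_gridSample {C : Set (X → ℝ)} {S : List (X × ℝ)} (hS : Realizable C S) :
    Realizable (epigraphClass C) (gridSample ε S) := by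
  obtain ⟨c, hc, hcS⟩ := hS
  refine ⟨_, ⟨c, hc, rfl⟩, fun e he => ?_⟩
  obtain ⟨q, hq, he⟩ := List.mem_flatMap.mp he
  obtain ⟨j, -, rfl⟩ := List.mem_map.mp he
  simp [hcS q hq]

variable {κ₀ : List ((X × ℝ) × Bool) → List ((X × ℝ) × Bool) × List Bool}

theorem gridCompress_subset (hsub : ∀ S, (κ₀ S).1 ⊆ S) (S : List (X × ℝ)) :
    (gridCompress ε κ₀ S).1 ⊆ S := by
  intro q hq
  obtain ⟨e, he, rfl⟩ := List.mem_map.mp hq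
  exact (gridParent_spec (hsub _ he)).1

theorem gridSample_gridCompress_subset (hsub : ∀ S, (κ₀ S).1 ⊆ S) (S : List (X × ℝ)) :
    (κ₀ (gridSample ε S)).1 ⊆ gridSample ε (gridCompress ε κ₀ S).1 := fun _ he =>
  List.mem_flatMap.mpr ⟨_, List.mem_map_of_mem he, (gridParent_spec (hsub _ he)).2⟩

theorem IsStable.apply_gridSample_gridCompress {C : Set (X → ℝ)}
    (hstable : IsStable (epigraphClass C) κ₀) (hsub : ∀ S, (κ₀ S).1 ⊆ S)
    {S : List (X × ℝ)} (hS : Realizable C S) :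
    κ₀ (gridSample ε (gridCompress ε κ₀ S).1) = κ₀ (gridSample ε S) :=
  hstable _ _ (realizable_gridSample hS) (gridSample_gridCompress_subset hsub S)
    (gridSample_mono (gridCompress_subset hsub S))

theorem isApproxLinfScheme_grid {C : Set (X → ℝ)} (hC : ∀ g ∈ C, ∀ x, g x ∈ Icc (0 : ℝ) 1)
    (hε : 0 < ε) {k : ℕ} {ρ₀ : List ((X × ℝ) × Bool) × List Bool → X × ℝ → Bool}
    (hscheme : IsExactRealizableScheme (epigraphClass C) k κ₀ ρ₀)
    (hstable : IsStable (epigraphClass C) κ₀) :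
    IsApproxLinfScheme C k ε (gridCompress ε κ₀) (gridReconstruct ε κ₀ ρ₀) := by
  obtain ⟨hsub, hsize, hcorrect⟩ := hscheme
  refine ⟨gridCompress_subset hsub, fun _ _ => thresholdDecode_mem_Icc hε.le _,
    fun S hS => by simpa [gridCompress] using hsize _ (realizable_gridSample hS),
    fun S hS q hq => abs_thresholdDecode_sub_le hε ?_ fun j hj => ?_⟩
  · obtain ⟨c, hc, hcS⟩ := hS
    exact hcS q hq ▸ hC c hc q.1
  · rw [hstable.apply_gridSample_gridCompress hsub hS]
    exact hcorrect _ (realizable_gridSample hS) _ (mem_gridSample_of_mem hq hj)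

end GridScheme

theorem IsApproxLinfScheme.isApproxLpScheme {C : Set (X → ℝ)} {k : ℕ} {ε : ℝ}
    {κ : List (X × ℝ) → List (X × ℝ) × List Bool} {ρ : List (X × ℝ) × List Bool → X → ℝ}
    (h : IsApproxLinfScheme C k ε κ ρ) (hε₀ : 0 ≤ ε) (hε₁ : ε ≤ 1) {p : ℝ} (hp : 1 ≤ p) :
    IsApproxLpScheme C k p ε κ ρ := by
  obtain ⟨hsub, hrange, hsize, hacc⟩ := h
  refine ⟨hsub, hrange, hsize, fun S hS => ?_⟩
  have hterm : ∀ t ∈ S.map fun q => |ρ (κ S) q.1 - q.2| ^ p, t ≤ ε := by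
    intro t ht
    obtain ⟨q, hq, rfl⟩ := List.mem_map.mp ht
    calc |ρ (κ S) q.1 - q.2| ^ p ≤ ε ^ p :=
          Real.rpow_le_rpow (abs_nonneg _) (hacc S hS q hq) (zero_le_one.trans hp)
      _ ≤ ε ^ (1 : ℝ) := Real.rpow_le_rpow_of_exponent_ge' hε₀ hε₁ zero_le_one hp
      _ = ε := Real.rpow_one ε
  simpa [mul_comm] using List.sum_le_card_nsmul _ ε hterm

/-- Regression reduction with stable binary compression: if every binary class of
finite VC dimension `d` has a stable exact realizable compression scheme of size at
most `f d`, then every class `C ⊆ [0,1]^X` of finite pseudo-dimension `d_P` admits,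
for every `ε ∈ (0,1)` and every `p ∈ [1,∞]` (the `ℓ_∞` case stated separately), an
`ε`-approximate realizable `ℓ_p` compression scheme of size at most `f d_P`. -/
theorem regression_approx_compression_of_stable (f : ℕ → ℕ)
    (hbin : ∀ (X' : Type u) (H : Set (X' → Bool)) (d : ℕ), IsVCDim H d →
      ∃ κ ρ, IsExactRealizableScheme H (f d) κ ρ ∧ IsStable H κ) :
    ∀ (X : Type u) (C : Set (X → ℝ)),
      (∀ g ∈ C, ∀ x, g x ∈ Set.Icc (0:ℝ) 1) →
      ∀ dP : ℕ, IsPseudoDim C dP →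
      ∀ ε : ℝ, 0 < ε → ε < 1 →
        (∃ κ ρ, IsApproxLinfScheme C (f dP) ε κ ρ) ∧
        (∀ p : ℝ, 1 ≤ p → ∃ κ ρ, IsApproxLpScheme C (f dP) p ε κ ρ) := by
  intro X C hC dP hdP ε hε₀ hε₁
  obtain ⟨κ₀, ρ₀, hscheme, hstable⟩ :=
    hbin (X × ℝ) (epigraphClass C) dP (isVCDim_epigraphClass hC hdP)
  have hlinf := isApproxLinfScheme_grid hC hε₀ hscheme hstable
  exact ⟨⟨_, _, hlinf⟩, fun p hp => ⟨_, _, hlinf.isApproxLpScheme hε₀.le hε₁.le hp⟩⟩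
end
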